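/- Let θ ∈ (0, π/2) and let u be a model eigenfunction of H(θ) with eigenvalue σ. Then ∫_{ℝ²₊} (t cos θ − s sin θ) u(s,t)² ds dt = 0. -/

import Mathlib

/-!
Since `∂ₛV_θ = -sin θ`, multiplying `H(θ)u = σu` by `∂ₛu` shows that `sin θ · V_θ u²` is the
divergence `∂ₛP + ∂ₜQ` with `P = ((∂ₛu)² - (∂ₜu)² - (V_θ² - σ)u²)/2` and `Q = ∂ₛu ∂ₜu`.
For each `s`, `∫ ∂ₜQ dt = -Q(s, 0) = 0` by the Neumann condition; after exchanging the order of
integration, each `∫ ∂ₛP ds` vanishes because `P` decays. Hence `sin θ ∫ V_θ u² = 0`, and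
`sin θ ≠ 0` on `(0, π/2)`.
-/

open Real MeasureTheory Set

noncomputable section

/-- Partial derivative with respect to the first variable. -/
def pd1 (u : ℝ → ℝ → ℝ) : ℝ → ℝ → ℝ := fun s t => deriv (fun x => u x t) s

/-- Partial derivative with respect to the second variable. -/
def pd2 (u : ℝ → ℝ → ℝ) : ℝ → ℝ → ℝ := fun s t => deriv (fun y => u s y) t

/-- The potential `V_θ(s,t) = t cos θ − s sin θ`. -/
def Vpot (θ : ℝ) : ℝ → ℝ → ℝ := fun s t => t * Real.cos θ - s * Real.sin θ

/-- The operator `H(θ) = −∂_s² − ∂_t² + V_θ²` applied to `u`. -/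
def Hop (θ : ℝ) (u : ℝ → ℝ → ℝ) : ℝ → ℝ → ℝ :=
  fun s t => - pd1 (pd1 u) s t - pd2 (pd2 u) s t + (Vpot θ s t)^2 * u s t

/-- Integral over the half-plane `{t > 0}` with respect to `ds dt`. -/
def intHalf (f : ℝ → ℝ → ℝ) : ℝ := ∫ s : ℝ, ∫ t in Set.Ioi (0:ℝ), f s t

/-- Schwartz-class on the closed half-plane: all iterated partial derivatives decay
faster than any power of `|s| + t`. -/
def SchwartzHalf (u : ℝ → ℝ → ℝ) : Prop :=
  ∀ k l n : ℕ, ∃ C : ℝ, ∀ s t : ℝ, 0 ≤ t →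
    |pd1^[k] (pd2^[l] u) s t| ≤ C * (1 + |s| + t) ^ (-(n:ℝ))

/-- A model eigenfunction of `H(θ)` with eigenvalue `σ`: smooth up to the boundary,
Schwartz-class, `L²`-normalized, Neumann boundary condition, and `H(θ)u = σu` on `{t ≥ 0}`. -/
structure IsModelEigen (θ : ℝ) (u : ℝ → ℝ → ℝ) (σ : ℝ) : Prop where
  smooth : ∀ n : ℕ, ContDiff ℝ n (fun p : ℝ × ℝ => u p.1 p.2)
  schwartz : SchwartzHalf u
  normalized : intHalf (fun s t => (u s t)^2) = 1
  neumann : ∀ s : ℝ, pd2 u s 0 = 0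
  eigen : ∀ s t : ℝ, 0 ≤ t → Hop θ u s t = σ * u s t

open Filter Topology
open scoped ContDiff

section PartialDeriv

variable {f : ℝ → ℝ → ℝ} {s t : ℝ}

theorem hasDerivAt_fderiv_apply_one_zero
    (hf : DifferentiableAt ℝ (fun p : ℝ × ℝ => f p.1 p.2) (s, t)) :
    HasDerivAt (fun x => f x t) (fderiv ℝ (fun p : ℝ × ℝ => f p.1 p.2) (s, t) (1, 0)) s :=
  hf.hasFDerivAt.comp_hasDerivAt (f := fun x => (x, t)) s
    ((hasDerivAt_id' s).prodMk (hasDerivAt_const s t))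

theorem hasDerivAt_fderiv_apply_zero_one
    (hf : DifferentiableAt ℝ (fun p : ℝ × ℝ => f p.1 p.2) (s, t)) :
    HasDerivAt (fun y => f s y) (fderiv ℝ (fun p : ℝ × ℝ => f p.1 p.2) (s, t) (0, 1)) t :=
  hf.hasFDerivAt.comp_hasDerivAt t ((hasDerivAt_const t s).prodMk (hasDerivAt_id' t))

theorem pd1_eq_fderiv (hf : DifferentiableAt ℝ (fun p : ℝ × ℝ => f p.1 p.2) (s, t)) :
    pd1 f s t = fderiv ℝ (fun p : ℝ × ℝ => f p.1 p.2) (s, t) (1, 0) :=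
  (hasDerivAt_fderiv_apply_one_zero hf).deriv

theorem pd2_eq_fderiv (hf : DifferentiableAt ℝ (fun p : ℝ × ℝ => f p.1 p.2) (s, t)) :
    pd2 f s t = fderiv ℝ (fun p : ℝ × ℝ => f p.1 p.2) (s, t) (0, 1) :=
  (hasDerivAt_fderiv_apply_zero_one hf).deriv

theorem hasDerivAt_pd1 (hf : DifferentiableAt ℝ (fun p : ℝ × ℝ => f p.1 p.2) (s, t)) :
    HasDerivAt (fun x => f x t) (pd1 f s t) s :=
  pd1_eq_fderiv hf ▸ hasDerivAt_fderiv_apply_one_zero hf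

theorem hasDerivAt_pd2 (hf : DifferentiableAt ℝ (fun p : ℝ × ℝ => f p.1 p.2) (s, t)) :
    HasDerivAt (fun y => f s y) (pd2 f s t) t :=
  pd2_eq_fderiv hf ▸ hasDerivAt_fderiv_apply_zero_one hf

variable {m n : ℕ∞ω}

theorem ContDiff.pd1 (hf : ContDiff ℝ n fun p : ℝ × ℝ => f p.1 p.2) (hmn : m + 1 ≤ n) :
    ContDiff ℝ m fun p : ℝ × ℝ => pd1 f p.1 p.2 := by
  have hdiff := (hf.of_le (le_add_self.trans hmn)).differentiable one_ne_zero
  simp_rw [pd1_eq_fderiv (hdiff _)]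
  exact (hf.fderiv_right hmn).clm_apply contDiff_const

theorem ContDiff.pd2 (hf : ContDiff ℝ n fun p : ℝ × ℝ => f p.1 p.2) (hmn : m + 1 ≤ n) :
    ContDiff ℝ m fun p : ℝ × ℝ => pd2 f p.1 p.2 := by
  have hdiff := (hf.of_le (le_add_self.trans hmn)).differentiable one_ne_zero
  simp_rw [pd2_eq_fderiv (hdiff _)]
  exact (hf.fderiv_right hmn).clm_apply contDiff_const

theorem pd1_pd2_comm (hf : ContDiff ℝ n fun p : ℝ × ℝ => f p.1 p.2) (hn : 2 ≤ n) :
    pd1 (pd2 f) s t = pd2 (pd1 f) s t := by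
  set F := fun p : ℝ × ℝ => f p.1 p.2
  have hF : Differentiable ℝ F := (hf.of_le (one_le_two.trans hn)).differentiable one_ne_zero
  have hF' : Differentiable ℝ (fderiv ℝ F) :=
    (hf.fderiv_right (m := 1) hn).differentiable one_ne_zero
  have hderiv_apply (v w : ℝ × ℝ) :
      fderiv ℝ (fun p => fderiv ℝ F p v) (s, t) w = fderiv ℝ (fderiv ℝ F) (s, t) w v := by
    simp [fderiv_clm_apply (hF' _) (differentiableAt_const v)]
  rw [pd1_eq_fderiv ((hf.pd2 (m := 1) hn).differentiable one_ne_zero _),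
    pd2_eq_fderiv ((hf.pd1 (m := 1) hn).differentiable one_ne_zero _)]
  simp_rw [pd1_eq_fderiv (hF _), pd2_eq_fderiv (hF _)]
  rw [hderiv_apply, hderiv_apply]
  exact (hf.contDiffAt.isSymmSndFDerivAt (by simpa using hn)).eq _ _

end PartialDeriv

section Decay

open Module

theorem tendsto_zero_of_mul_abs_le {α : Type*} {l : Filter α} {w g : α → ℝ} {C : ℝ}
    (hw : Tendsto w l atTop) (hg : ∀ᶠ x in l, w x * |g x| ≤ C) : Tendsto g l (𝓝 0) := by
  refine squeeze_zero_norm' (a := fun x => C / w x) ?_ (tendsto_const_nhds.div_atTop hw)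
  filter_upwards [hg, hw.eventually_gt_atTop 0] with x hx hpos
  rwa [Real.norm_eq_abs, le_div_iff₀' hpos]

theorem integrableOn_of_one_add_norm_pow_mul_le {E F : Type*} [NormedAddCommGroup E]
    [NormedSpace ℝ E] [FiniteDimensional ℝ E] [MeasurableSpace E] [BorelSpace E]
    [NormedAddCommGroup F] {μ : Measure E} [μ.IsAddHaarMeasure] {g : E → F} {S : Set E}
    {k : ℕ} {C : ℝ} (hk : finrank ℝ E < k) (hS : MeasurableSet S) (hg : ContinuousOn g S)
    (hC : ∀ x ∈ S, (1 + ‖x‖) ^ k * ‖g x‖ ≤ C) : IntegrableOn g S μ := by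
  have hweight : Integrable (fun x => (1 + ‖x‖) ^ (-(k : ℝ))) μ :=
    integrable_one_add_norm (by exact_mod_cast hk)
  refine ((hweight.const_mul C).integrableOn).mono' (hg.aestronglyMeasurable hS) ?_
  filter_upwards [ae_restrict_mem hS] with x hx
  have hpos : 0 < (1 + ‖x‖) ^ k := by positivity
  rw [Real.rpow_neg (by positivity), Real.rpow_natCast, ← div_eq_mul_inv, le_div_iff₀' hpos]
  exact hC x hx

def RapidDecay (g : ℝ → ℝ → ℝ) : Prop :=
  ∀ n : ℕ, ∃ C, ∀ s t, 0 ≤ t → (1 + |s| + t) ^ n * |g s t| ≤ C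

theorem SchwartzHalf.rapidDecay {u : ℝ → ℝ → ℝ} (hu : SchwartzHalf u) (k l : ℕ) :
    RapidDecay (pd1^[k] (pd2^[l] u)) := by
  intro n
  obtain ⟨C, hC⟩ := hu k l n
  refine ⟨C, fun s t ht => ?_⟩
  have hpos : 0 < (1 + |s| + t) ^ n := by positivity
  rw [← le_div_iff₀' hpos, div_eq_mul_inv, ← Real.rpow_natCast,
    ← Real.rpow_neg (by positivity)]
  exact hC s t ht

namespace RapidDecay

variable {g h : ℝ → ℝ → ℝ}

theorem add (hg : RapidDecay g) (hh : RapidDecay h) : RapidDecay fun s t => g s t + h s t := by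
  intro n
  obtain ⟨C, hC⟩ := hg n
  obtain ⟨D, hD⟩ := hh n
  refine ⟨C + D, fun s t ht => ?_⟩
  have hw : 0 ≤ (1 + |s| + t) ^ n := by positivity
  nlinarith [hC s t ht, hD s t ht, abs_add_le (g s t) (h s t)]

theorem sub (hg : RapidDecay g) (hh : RapidDecay h) : RapidDecay fun s t => g s t - h s t := by
  intro n
  obtain ⟨C, hC⟩ := hg n
  obtain ⟨D, hD⟩ := hh n
  refine ⟨C + D, fun s t ht => ?_⟩
  have hw : 0 ≤ (1 + |s| + t) ^ n := by positivity
  nlinarith [hC s t ht, hD s t ht, abs_sub (g s t) (h s t)]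

theorem div_const (hg : RapidDecay g) (c : ℝ) : RapidDecay fun s t => g s t / c := by
  intro n
  obtain ⟨C, hC⟩ := hg n
  refine ⟨C / |c|, fun s t ht => ?_⟩
  rw [abs_div, mul_div_assoc']
  exact div_le_div_of_nonneg_right (hC s t ht) (abs_nonneg c)

theorem mul_of_abs_le {D : ℝ} {k : ℕ} (hh : ∀ s t, 0 ≤ t → |h s t| ≤ D * (1 + |s| + t) ^ k)
    (hg : RapidDecay g) : RapidDecay fun s t => h s t * g s t := by
  intro n
  obtain ⟨C, hC⟩ := hg (n + k)
  refine ⟨|D| * C, fun s t ht => ?_⟩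
  calc (1 + |s| + t) ^ n * |h s t * g s t|
      ≤ (1 + |s| + t) ^ n * (|D| * (1 + |s| + t) ^ k) * |g s t| := by
        rw [abs_mul, ← mul_assoc]
        gcongr
        exact (hh s t ht).trans (by gcongr; exact le_abs_self D)
    _ = |D| * ((1 + |s| + t) ^ (n + k) * |g s t|) := by ring
    _ ≤ |D| * C := by gcongr; exact hC s t ht

theorem mul (hh : RapidDecay h) (hg : RapidDecay g) : RapidDecay fun s t => h s t * g s t := by
  obtain ⟨C, hC⟩ := hh 0
  exact hg.mul_of_abs_le (k := 0) fun s t ht => by simpa using hC s t ht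

theorem sq (hg : RapidDecay g) : RapidDecay fun s t => g s t ^ 2 := by
  simpa only [pow_two] using hg.mul hg

theorem tendsto_atTop (hg : RapidDecay g) (s : ℝ) : Tendsto (g s) atTop (𝓝 0) := by
  obtain ⟨C, hC⟩ := hg 1
  refine tendsto_zero_of_mul_abs_le (C := C) (w := fun t => 1 + |s| + t)
    (tendsto_atTop_add_const_left _ _ tendsto_id) ?_
  filter_upwards [eventually_ge_atTop 0] with t ht
  simpa using hC s t ht

theorem tendsto_cocompact (hg : RapidDecay g) {t : ℝ} (ht : 0 ≤ t) :
    Tendsto (fun s => g s t) (cocompact ℝ) (𝓝 0) := by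
  obtain ⟨C, hC⟩ := hg 1
  refine tendsto_zero_of_mul_abs_le (C := C) (w := fun s => 1 + |s| + t)
    (tendsto_atTop_add_const_right _ _ (tendsto_atTop_add_const_left _ _
      tendsto_norm_cocompact_atTop)) (Eventually.of_forall fun s => ?_)
  simpa using hC s t ht

theorem integrableOn_Ioi (hg : RapidDecay g) (hc : Continuous fun p : ℝ × ℝ => g p.1 p.2)
    (s : ℝ) : IntegrableOn (g s) (Ioi 0) := by
  obtain ⟨C, hC⟩ := hg 2
  refine integrableOn_of_one_add_norm_pow_mul_le (k := 2) (by simp) measurableSet_Ioi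
    (hc.comp (Continuous.prodMk_right s)).continuousOn
    fun t (ht : 0 < t) => le_trans ?_ (hC s t ht.le)
  rw [Real.norm_eq_abs, Real.norm_eq_abs, abs_of_pos ht]
  gcongr ?_ ^ 2 * _
  linarith [abs_nonneg s]

theorem integrable_slice (hg : RapidDecay g) (hc : Continuous fun p : ℝ × ℝ => g p.1 p.2)
    {t : ℝ} (ht : 0 ≤ t) : Integrable fun s => g s t := by
  obtain ⟨C, hC⟩ := hg 2
  refine integrableOn_univ.1 <| integrableOn_of_one_add_norm_pow_mul_le (k := 2) (by simp)
    MeasurableSet.univ (hc.comp (Continuous.prodMk_left t)).continuousOn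
    fun s _ => le_trans ?_ (hC s t ht)
  rw [Real.norm_eq_abs, Real.norm_eq_abs]
  gcongr ?_ ^ 2 * _
  linarith

theorem integrable_prod (hg : RapidDecay g) (hc : Continuous fun p : ℝ × ℝ => g p.1 p.2) :
    Integrable (Function.uncurry g) (volume.prod (volume.restrict (Ioi 0))) := by
  obtain ⟨C, hC⟩ := hg 3
  have hμ : (volume : Measure ℝ).prod (volume.restrict (Ioi 0)) =
      volume.restrict (univ ×ˢ Ioi (0 : ℝ)) := by
    rw [Measure.volume_eq_prod, ← Measure.prod_restrict, Measure.restrict_univ]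
  rw [hμ]
  refine integrableOn_of_one_add_norm_pow_mul_le (k := 3) (by simp) (MeasurableSet.univ.prod
    measurableSet_Ioi) hc.continuousOn fun p hp => le_trans ?_ (hC p.1 p.2 (le_of_lt hp.2))
  have ht : 0 < p.2 := hp.2
  rw [Prod.norm_def, Real.norm_eq_abs, Real.norm_eq_abs, Real.norm_eq_abs, abs_of_pos ht]
  gcongr ?_ ^ 3 * _
  linarith [max_le (le_add_of_nonneg_right ht.le) (le_add_of_nonneg_left (abs_nonneg p.1))]

end RapidDecay

end Decay

section HalfPlaneIntegrals

variable {f : ℝ → ℝ → ℝ}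

theorem integral_Ioi_pd2 (hf : ContDiff ℝ 1 fun p : ℝ × ℝ => f p.1 p.2) (hdecay : RapidDecay f)
    (hdecay' : RapidDecay (pd2 f)) (s : ℝ) : ∫ t in Ioi 0, pd2 f s t = -f s 0 := by
  have hcont' : Continuous fun p : ℝ × ℝ => pd2 f p.1 p.2 := (hf.pd2 (m := 0) le_rfl).continuous
  exact (integral_Ioi_of_hasDerivAt_of_tendsto
    (hf.continuous.comp (Continuous.prodMk_right s)).continuousWithinAt
    (fun t _ => hasDerivAt_pd2 (hf.differentiable one_ne_zero _))
    (hdecay'.integrableOn_Ioi hcont' s)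
    (hdecay.tendsto_atTop s)).trans (zero_sub _)

theorem integral_pd1 (hf : ContDiff ℝ 1 fun p : ℝ × ℝ => f p.1 p.2) (hdecay : RapidDecay f)
    (hdecay' : RapidDecay (pd1 f)) {t : ℝ} (ht : 0 ≤ t) : ∫ s, pd1 f s t = 0 := by
  have hcont' : Continuous fun p : ℝ × ℝ => pd1 f p.1 p.2 := (hf.pd1 (m := 0) le_rfl).continuous
  simpa using integral_of_hasDerivAt_of_tendsto
    (fun s => hasDerivAt_pd1 (hf.differentiable one_ne_zero _))
    (hdecay'.integrable_slice hcont' ht)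
    ((hdecay.tendsto_cocompact ht).mono_left atBot_le_cocompact)
    ((hdecay.tendsto_cocompact ht).mono_left atTop_le_cocompact)

theorem intHalf_pd1 (hf : ContDiff ℝ 1 fun p : ℝ × ℝ => f p.1 p.2) (hdecay : RapidDecay f)
    (hdecay' : RapidDecay (pd1 f)) : intHalf (pd1 f) = 0 := by
  have hcont' : Continuous fun p : ℝ × ℝ => pd1 f p.1 p.2 := (hf.pd1 (m := 0) le_rfl).continuous
  rw [intHalf, integral_integral_swap (hdecay'.integrable_prod hcont'),
    setIntegral_congr_fun measurableSet_Ioi fun t ht => integral_pd1 hf hdecay hdecay' ht.le,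
    integral_zero]

end HalfPlaneIntegrals

section Model

variable {θ σ : ℝ} {u : ℝ → ℝ → ℝ}

theorem abs_Vpot_le {s t : ℝ} (ht : 0 ≤ t) : |Vpot θ s t| ≤ |s| + t := by
  unfold Vpot
  have hcos : |t * cos θ| ≤ t := by
    rw [abs_mul, abs_of_nonneg ht]
    exact mul_le_of_le_one_right ht (abs_cos_le_one θ)
  have hsin : |s * sin θ| ≤ |s| := by
    rw [abs_mul]
    exact mul_le_of_le_one_right (abs_nonneg s) (abs_sin_le_one θ)
  linarith [abs_sub (t * cos θ) (s * sin θ)]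

theorem abs_Vpot_sq_sub_le {s t : ℝ} (ht : 0 ≤ t) :
    |Vpot θ s t ^ 2 - σ| ≤ (1 + |σ|) * (1 + |s| + t) ^ 2 := by
  have hV := abs_Vpot_le (θ := θ) (s := s) ht
  have hw : 1 ≤ (1 + |s| + t) ^ 2 := one_le_pow₀ (by linarith [abs_nonneg s])
  have hV2 : |Vpot θ s t| ^ 2 ≤ (1 + |s| + t) ^ 2 := by gcongr; linarith
  calc |Vpot θ s t ^ 2 - σ| ≤ |Vpot θ s t| ^ 2 + |σ| := by
        rw [← abs_pow]
        exact abs_sub _ _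
    _ ≤ (1 + |σ|) * (1 + |s| + t) ^ 2 := by nlinarith [abs_nonneg σ]

theorem contDiff_Vpot {n : ℕ∞ω} : ContDiff ℝ n fun p : ℝ × ℝ => Vpot θ p.1 p.2 := by
  unfold Vpot
  fun_prop

def fluxS (θ σ : ℝ) (u : ℝ → ℝ → ℝ) (s t : ℝ) : ℝ :=
  (pd1 u s t ^ 2 - pd2 u s t ^ 2 - (Vpot θ s t ^ 2 - σ) * u s t ^ 2) / 2

def fluxT (u : ℝ → ℝ → ℝ) (s t : ℝ) : ℝ := pd1 u s t * pd2 u s t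

theorem contDiff_fluxS {n : ℕ∞ω} (hu : ContDiff ℝ (n + 1) fun p : ℝ × ℝ => u p.1 p.2) :
    ContDiff ℝ n fun p : ℝ × ℝ => fluxS θ σ u p.1 p.2 := by
  have h1 := hu.pd1 (m := n) le_rfl
  have h2 := hu.pd2 (m := n) le_rfl
  have h0 := hu.of_le le_self_add
  have hV := contDiff_Vpot (θ := θ) (n := n)
  unfold fluxS
  fun_prop

theorem contDiff_fluxT {n : ℕ∞ω} (hu : ContDiff ℝ (n + 1) fun p : ℝ × ℝ => u p.1 p.2) :
    ContDiff ℝ n fun p : ℝ × ℝ => fluxT u p.1 p.2 :=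
  (hu.pd1 le_rfl).mul (hu.pd2 le_rfl)

theorem pd1_fluxS (hu : ContDiff ℝ 2 fun p : ℝ × ℝ => u p.1 p.2) (s t : ℝ) :
    pd1 (fluxS θ σ u) s t = pd1 u s t * pd1 (pd1 u) s t - pd2 u s t * pd1 (pd2 u) s t
      - (Vpot θ s t ^ 2 - σ) * u s t * pd1 u s t + sin θ * Vpot θ s t * u s t ^ 2 := by
  have hu0 := hasDerivAt_pd1 (s := s) (t := t) (hu.differentiable two_ne_zero _)
  have hu1 := hasDerivAt_pd1 ((hu.pd1 (m := 1) le_rfl).differentiable one_ne_zero (s, t))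
  have hu2 := hasDerivAt_pd1 ((hu.pd2 (m := 1) le_rfl).differentiable one_ne_zero (s, t))
  have hV : HasDerivAt (fun x => Vpot θ x t) (-sin θ) s := by
    unfold Vpot
    simpa using ((hasDerivAt_id' s).mul_const (sin θ)).const_sub (t * cos θ)
  refine ((((hu1.fun_pow 2).sub (hu2.fun_pow 2)).sub
    (((hV.fun_pow 2).sub_const σ).mul (hu0.fun_pow 2))).div_const 2).deriv.trans ?_
  ring

theorem pd2_fluxT (hu : ContDiff ℝ 2 fun p : ℝ × ℝ => u p.1 p.2) (s t : ℝ) :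
    pd2 (fluxT u) s t = pd1 (pd2 u) s t * pd2 u s t + pd1 u s t * pd2 (pd2 u) s t := by
  have hu1 := hasDerivAt_pd2 ((hu.pd1 (m := 1) le_rfl).differentiable one_ne_zero (s, t))
  have hu2 := hasDerivAt_pd2 ((hu.pd2 (m := 1) le_rfl).differentiable one_ne_zero (s, t))
  rw [← pd1_pd2_comm hu le_rfl] at hu1
  exact (hu1.mul hu2).deriv

end Model

namespace IsModelEigen

variable {θ σ : ℝ} {u : ℝ → ℝ → ℝ}

theorem pd1_fluxS_add_pd2_fluxT (hu : IsModelEigen θ u σ) {s t : ℝ} (ht : 0 ≤ t) :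
    pd1 (fluxS θ σ u) s t + pd2 (fluxT u) s t = sin θ * (Vpot θ s t * u s t ^ 2) := by
  have heigen := hu.eigen s t ht
  unfold Hop at heigen
  rw [pd1_fluxS (hu.smooth 2), pd2_fluxT (hu.smooth 2)]
  linear_combination (-pd1 u s t) * heigen

theorem contDiff_fluxS (hu : IsModelEigen θ u σ) :
    ContDiff ℝ 1 fun p : ℝ × ℝ => fluxS θ σ u p.1 p.2 :=
  _root_.contDiff_fluxS (hu.smooth 2)

theorem contDiff_fluxT (hu : IsModelEigen θ u σ) :
    ContDiff ℝ 1 fun p : ℝ × ℝ => fluxT u p.1 p.2 :=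
  _root_.contDiff_fluxT (hu.smooth 2)

theorem rapidDecay_fluxS (hu : IsModelEigen θ u σ) : RapidDecay (fluxS θ σ u) := by
  have h00 : RapidDecay u := hu.schwartz.rapidDecay 0 0
  have h10 : RapidDecay (pd1 u) := hu.schwartz.rapidDecay 1 0
  have h01 : RapidDecay (pd2 u) := hu.schwartz.rapidDecay 0 1
  exact ((h10.sq.sub h01.sq).sub
    (h00.sq.mul_of_abs_le fun s t ht => abs_Vpot_sq_sub_le ht)).div_const 2

theorem rapidDecay_pd1_fluxS (hu : IsModelEigen θ u σ) : RapidDecay (pd1 (fluxS θ σ u)) := by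
  have h00 : RapidDecay u := hu.schwartz.rapidDecay 0 0
  have h10 : RapidDecay (pd1 u) := hu.schwartz.rapidDecay 1 0
  have h01 : RapidDecay (pd2 u) := hu.schwartz.rapidDecay 0 1
  have h20 : RapidDecay (pd1 (pd1 u)) := hu.schwartz.rapidDecay 2 0
  have h11 : RapidDecay (pd1 (pd2 u)) := hu.schwartz.rapidDecay 1 1
  have hsinV (s t : ℝ) (ht : 0 ≤ t) : |sin θ * Vpot θ s t| ≤ 1 * (1 + |s| + t) ^ 1 := by
    rw [abs_mul, one_mul, pow_one]
    exact (mul_le_of_le_one_left (abs_nonneg _) (abs_sin_le_one θ)).trans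
      (by linarith [abs_Vpot_le (θ := θ) (s := s) ht])
  rw [show pd1 (fluxS θ σ u) = _ from funext₂ (pd1_fluxS (hu.smooth 2))]
  exact (((h10.mul h20).sub (h01.mul h11)).sub
    ((h00.mul_of_abs_le fun s t ht => abs_Vpot_sq_sub_le ht).mul h10)).add
    (h00.sq.mul_of_abs_le hsinV)

theorem rapidDecay_fluxT (hu : IsModelEigen θ u σ) : RapidDecay (fluxT u) :=
  (hu.schwartz.rapidDecay 1 0).mul (hu.schwartz.rapidDecay 0 1)

theorem rapidDecay_pd2_fluxT (hu : IsModelEigen θ u σ) : RapidDecay (pd2 (fluxT u)) := by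
  rw [show pd2 (fluxT u) = _ from funext₂ (pd2_fluxT (hu.smooth 2))]
  exact ((hu.schwartz.rapidDecay 1 1).mul (hu.schwartz.rapidDecay 0 1)).add
    ((hu.schwartz.rapidDecay 1 0).mul (hu.schwartz.rapidDecay 0 2))


theorem integral_Ioi_sin_mul_Vpot_mul_sq (hu : IsModelEigen θ u σ) (s : ℝ) :
    ∫ t in Ioi 0, sin θ * (Vpot θ s t * u s t ^ 2) = ∫ t in Ioi 0, pd1 (fluxS θ σ u) s t := by
  have hcontS := (hu.contDiff_fluxS.pd1 (m := 0) le_rfl).continuous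
  have hcontT := (hu.contDiff_fluxT.pd2 (m := 0) le_rfl).continuous
  have hboundary : fluxT u s 0 = 0 := by rw [fluxT, hu.neumann, mul_zero]
  calc ∫ t in Ioi 0, sin θ * (Vpot θ s t * u s t ^ 2)
      = ∫ t in Ioi 0, (pd1 (fluxS θ σ u) s t + pd2 (fluxT u) s t) :=
        setIntegral_congr_fun measurableSet_Ioi fun t ht =>
          (hu.pd1_fluxS_add_pd2_fluxT (le_of_lt ht)).symm
    _ = ∫ t in Ioi 0, pd1 (fluxS θ σ u) s t := by
        rw [integral_add (hu.rapidDecay_pd1_fluxS.integrableOn_Ioi hcontS s)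
          (hu.rapidDecay_pd2_fluxT.integrableOn_Ioi hcontT s), integral_Ioi_pd2 hu.contDiff_fluxT
          hu.rapidDecay_fluxT hu.rapidDecay_pd2_fluxT, hboundary, neg_zero, add_zero]

end IsModelEigen

/-- Lemma 2.4 (momentum formula): `∫ V_θ u² = 0`. -/
theorem momentum_formula (θ : ℝ) (hθ : θ ∈ Set.Ioo 0 (π/2))
    (u : ℝ → ℝ → ℝ) (σ : ℝ) (hu : IsModelEigen θ u σ) :
    intHalf (fun s t => Vpot θ s t * (u s t)^2) = 0 := by
  have hsin : sin θ ≠ 0 := (sin_pos_of_pos_of_lt_pi hθ.1 (by linarith [hθ.2, pi_pos])).ne'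
  have hmomentum : sin θ * intHalf (fun s t => Vpot θ s t * (u s t)^2) = 0 := by
    rw [intHalf, ← integral_const_mul]
    simp_rw [← integral_const_mul, hu.integral_Ioi_sin_mul_Vpot_mul_sq]
    exact intHalf_pd1 hu.contDiff_fluxS hu.rapidDecay_fluxS hu.rapidDecay_pd1_fluxS
  exact (mul_eq_zero.1 hmomentum).resolve_left hsin
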